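/- Let x, λ ∈ ℝ and let i, j be integers with 1 ≤ j < i. Then x^{(i−j)|λ} · binom(i−1, j−1) − (x + (i−2)λ) · x^{(i−j−1)|λ} · binom(i−2, j−1) = binom(i−2, j−2) · (x−λ)^{(i−j)|λ}, where binom(i−2, j−2) := 0 when j = 1. In other words, the first step of Neville elimination applied to the generalized lower triangular Pascal matrix P_{n,λ}[x] produces a matrix whose entry in position (i,j), for i > j, equals binom(i−2, j−2)(x−λ)^{(i−j)|λ}, so that its trailing principal submatrix on rows and columns 2, …, n+1 equals the matrix P_{n,λ}[x−λ] on rows and columns 1, …, n. -/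
import Mathlib


/-- `genPow x lam m` is the generalized power `x^{m|λ} = x(x+λ)⋯(x+(m−1)λ)`,
with `x^{0|λ} = 1`. -/
noncomputable def genPow (x lam : ℝ) (m : ℕ) : ℝ :=
  ∏ t ∈ Finset.range m, (x + t * lam)

lemma genPow_succ (x lam : ℝ) (m : ℕ) :
    genPow x lam (m + 1) = genPow x lam m * (x + m * lam) :=
  Finset.prod_range_succ _ _

lemma genPow_sub_succ (x lam : ℝ) (m : ℕ) :
    genPow (x - lam) lam (m + 1) = (x - lam) * genPow x lam m := by
  rw [genPow, Finset.prod_range_succ']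
  simp only [Nat.cast_zero, zero_mul, add_zero]
  rw [mul_comm, genPow]
  congr 1
  apply Finset.prod_congr rfl
  intro t _
  push_cast
  ring

/-- For integers `1 ≤ j < i`,
`x^{(i−j)|λ}·binom(i−1,j−1) − (x+(i−2)λ)·x^{(i−j−1)|λ}·binom(i−2,j−1)
  = binom(i−2,j−2)·(x−λ)^{(i−j)|λ}`,
where `binom(i−2, j−2) := 0` when `j = 1`.  This is the identity showing that
the first step of Neville elimination applied to `P_{n,λ}[x]` produces, in
position `(i,j)` with `i > j`, the entry `binom(i−2,j−2)(x−λ)^{(i−j)|λ}`, so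
that its trailing principal submatrix on rows and columns `2, …, n+1` equals
`P_{n,λ}[x−λ]` on rows and columns `1, …, n`. -/
theorem neville_first_step_genPascal (x lam : ℝ) (i j : ℕ)
    (hj : 1 ≤ j) (hij : j < i) :
    genPow x lam (i - j) * ((i - 1).choose (j - 1))
        - (x + ((i : ℝ) - 2) * lam) * genPow x lam (i - j - 1) *
          ((i - 2).choose (j - 1))
      = (if j = 1 then 0 else (((i - 2).choose (j - 2) : ℕ) : ℝ)) *
          genPow (x - lam) lam (i - j) := by
  obtain ⟨m, rfl⟩ : ∃ m, i = j + (m + 1) := ⟨i - j - 1, by omega⟩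
  rcases Nat.lt_or_ge j 2 with h | h
  · have hj1 : j = 1 := by omega
    subst hj1
    rw [if_pos rfl]
    have e1 : 1 + (m + 1) - 1 = m + 1 := by omega
    have e2 : 1 + (m + 1) - 2 = m := by omega
    rw [show 1 + (m + 1) - 1 - 1 = m from by omega, e1, e2]
    simp only [Nat.choose_zero_right, Nat.cast_one, genPow_succ]
    push_cast
    ring_nf
    simp [Nat.choose_zero_right]
  · obtain ⟨k, rfl⟩ : ∃ k, j = k + 2 := ⟨j - 2, by omega⟩
    rw [if_neg (by omega)]
    rw [show k + 2 + (m + 1) - (k + 2) = m + 1 from by omega,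
      show m + 1 - 1 = m from rfl,
      show k + 2 + (m + 1) - 1 = k + m + 2 from by omega,
      show k + 2 + (m + 1) - 2 = k + m + 1 from by omega,
      show k + 2 - 1 = k + 1 from by omega,
      show k + 2 - 2 = k from by omega]
    have h1 : (((k + m + 2).choose (k + 1) : ℕ) : ℝ)
        = ((k + m + 1).choose k : ℕ) + ((k + m + 1).choose (k + 1) : ℕ) := by
      rw [show k + m + 2 = (k + m + 1) + 1 from rfl, Nat.choose_succ_succ]
      push_cast; ring
    have h2 : (((k + m + 1).choose (k + 1) : ℕ) : ℝ) * (k + 1)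
        = (((k + m + 1).choose k : ℕ) : ℝ) * (m + 1) := by
      have := Nat.choose_succ_right_eq (k + m + 1) k
      have hd : k + m + 1 - k = m + 1 := by omega
      rw [hd] at this
      exact_mod_cast congrArg (Nat.cast : ℕ → ℝ) this
    rw [genPow_succ, genPow_sub_succ]
    push_cast
    linear_combination genPow x lam m * (x + m * lam) * h1 - lam * genPow x lam m * h2
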